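/- In the random intersection graph G(n,m,F) with m = ⌊βn^α⌋ and p_i = min(γ W_i n^{-(1+α)/2}, 1), if F has finite mean and α < 1, then the degree D_i of a given vertex i converges in distribution to a point mass at 0 as n → ∞. -/

import Mathlib

/-!
Vertex `0` has positive degree only if it joins some group, which by a union bound over the
`m` groups has conditional probability at most `m p₀ ≤ m γ W₀ n^{-(1+α)/2}`. Averaging over the
weights, `P(D₀ ≠ 0) ≤ γ E[W₀⁺] ⌊β n^α⌋ n^{-(1+α)/2} = O(n^{-(1-α)/2}) → 0`, so `P(D₀ = 0) → 1`
and `P(D₀ = k) → 0` for `k ≠ 0`.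
-/

open MeasureTheory ProbabilityTheory Filter Real

noncomputable section

/-- Bernoulli measure on `Bool` with success probability `p` (clamped into `[0,1]`). -/
def bern (p : ℝ) : Measure Bool :=
  (PMF.bernoulli (Real.toNNReal (min p 1))
    (Real.toNNReal_le_one.mpr (min_le_right _ _))).toMeasure

instance bern.isProbabilityMeasure (p : ℝ) : IsProbabilityMeasure (bern p) := by
  unfold bern; infer_instance

/-- The (conditional) law of the bipartite graph `B(n,m,·)` given the group-membership
probabilities `p i` of the `n` vertices: vertex `i` is joined to each of the `m` groups
independently with probability `p i`. -/
def bipLaw (n m : ℕ) (p : Fin n → ℝ) : Measure (Fin n → Fin m → Bool) :=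
  Measure.pi fun i => Measure.pi fun _ : Fin m => bern (p i)

instance bipLaw.isProbabilityMeasure (n m : ℕ) (p : Fin n → ℝ) :
    IsProbabilityMeasure (bipLaw n m p) := by
  unfold bipLaw; infer_instance

/-- The number of groups, `m = ⌊β n^α⌋`. -/
def numGroups (β α : ℝ) (n : ℕ) : ℕ := ⌊β * (n : ℝ) ^ α⌋₊

/-- The group-membership probability `p_i = min(γ w n^{-(1+α)/2}, 1)` of a vertex
with weight `w`. -/
def pw (γ α : ℝ) (n : ℕ) (w : ℝ) : ℝ := min (γ * w * (n : ℝ) ^ (-(1 + α) / 2)) 1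

/-- Two distinct vertices are adjacent in the random intersection graph iff they share
at least one group in the bipartite graph. -/
def Adj {n m : ℕ} (B : Fin n → Fin m → Bool) (i j : Fin n) : Prop :=
  ∃ a : Fin m, B i a ∧ B j a

/-- The degree of vertex `i` in the random intersection graph determined by the
bipartite graph `B`. -/
def deg {n m : ℕ} (B : Fin n → Fin m → Bool) (i : Fin n) : ℕ :=
  Set.ncard {j | j ≠ i ∧ Adj B i j}

/-- The distribution of the degree of vertex `0` in `G(n,m,F)`: the probability that
the degree equals `k`, all the weights being i.i.d. with law `F`. -/
def degPMF (α β γ : ℝ) (F : Measure ℝ) (n : ℕ) (k : ℕ) : ℝ :=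
  if h : n ≠ 0 then
    haveI : NeZero n := ⟨h⟩
    ∫ v : Fin n → ℝ,
      ((bipLaw n (numGroups β α n) fun i => pw γ α n (v i)) {B | deg B 0 = k}).toReal
      ∂ Measure.pi fun _ : Fin n => F
  else 0

theorem MeasureTheory.Measure.measurable_of_measurable_coe_singleton {X Y : Type*}
    [MeasurableSpace X] [Countable X] [MeasurableSingletonClass X] [MeasurableSpace Y] {μ : Y → Measure X}
    (h : ∀ x, Measurable fun y => μ y {x}) : Measurable μ := by
  refine Measure.measurable_of_measurable_coe μ fun s hs => ?_
  simp_rw [← Measure.tsum_indicator_apply_singleton _ s hs]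
  refine Measurable.tsum fun x => ?_
  by_cases hx : x ∈ s <;> simp [hx, h x]

lemma bern_apply_true (p : ℝ) : bern p {true} = ENNReal.ofReal (min p 1) := by
  simp [bern, PMF.bernoulli_apply, ENNReal.ofReal]

lemma measurable_bern : Measurable bern := by
  refine Measure.measurable_of_measurable_coe_singleton fun b => ?_
  cases b <;> simp [bern, PMF.bernoulli_apply] <;> fun_prop

lemma bipLaw_singleton (n m : ℕ) (p : Fin n → ℝ) (B : Fin n → Fin m → Bool) :
    bipLaw n m p {B} = ∏ i, ∏ a, bern (p i) {B i a} := by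
  simp_rw [bipLaw, ← Set.univ_pi_singleton, Measure.pi_pi]

lemma measurable_bipLaw (n m : ℕ) : Measurable (bipLaw n m) :=
  Measure.measurable_of_measurable_coe_singleton fun B => by
    simp_rw [bipLaw_singleton]
    exact Finset.measurable_prod _ fun i _ => Finset.measurable_prod _ fun a _ =>
      (Measure.measurable_coe (measurableSet_singleton _)).comp
        (measurable_bern.comp (measurable_pi_apply i))

lemma bipLaw_exists_le (n m : ℕ) (p : Fin n → ℝ) (i : Fin n) :
    bipLaw n m p {B | ∃ a, B i a = true} ≤ m * ENNReal.ofReal (p i) := by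
  have hpi := measurePreserving_eval (fun i => Measure.pi fun _ : Fin m => bern (p i)) i
  calc bipLaw n m p {B | ∃ a, B i a = true}
      = (Measure.pi fun _ : Fin m => bern (p i)) (⋃ a, Function.eval a ⁻¹' {true}) := by
        rw [bipLaw, ← hpi.measure_preimage (Set.to_countable _).measurableSet.nullMeasurableSet]
        congr 1; ext; simp
    _ ≤ ∑ a, (Measure.pi fun _ : Fin m => bern (p i)) (Function.eval a ⁻¹' {true}) :=
        measure_iUnion_fintype_le _ _
    _ = m * bern (p i) {true} := by
        simp [(measurePreserving_eval (fun _ : Fin m => bern (p i)) _).measure_preimage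
          (measurableSet_singleton true).nullMeasurableSet]
    _ ≤ m * ENNReal.ofReal (p i) := by
        rw [bern_apply_true]; gcongr; exact min_le_left _ _

lemma exists_of_deg_ne_zero {n m : ℕ} {B : Fin n → Fin m → Bool} {i : Fin n}
    (h : deg B i ≠ 0) : ∃ a, B i a = true := by
  obtain ⟨j, -, a, hia, -⟩ := Set.nonempty_of_ncard_ne_zero h
  exact ⟨a, hia⟩

lemma measurable_pw (γ α : ℝ) (n : ℕ) : Measurable (pw γ α n) := by
  unfold pw; fun_prop

-- The unconditional law of `B(n,m,F)`: `bipLaw` averaged over i.i.d. weights with law `F`.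
def annealedLaw (α β γ : ℝ) (F : Measure ℝ) (n : ℕ) :
    Measure (Fin n → Fin (numGroups β α n) → Bool) :=
  (Measure.pi fun _ : Fin n => F).bind fun v => bipLaw n (numGroups β α n) fun i => pw γ α n (v i)

section annealedLaw

variable {α β γ : ℝ} {F : Measure ℝ} {n : ℕ}

lemma measurable_bipLaw_pw :
    Measurable fun v : Fin n → ℝ => bipLaw n (numGroups β α n) fun i => pw γ α n (v i) :=
  (measurable_bipLaw _ _).comp (measurable_pi_lambda _ fun i =>
    (measurable_pw γ α n).comp (measurable_pi_apply i))

lemma annealedLaw_apply {S : Set (Fin n → Fin (numGroups β α n) → Bool)} (hS : MeasurableSet S) :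
    annealedLaw α β γ F n S = ∫⁻ v, bipLaw n (numGroups β α n) (fun i => pw γ α n (v i)) S
      ∂Measure.pi fun _ : Fin n => F :=
  Measure.bind_apply hS measurable_bipLaw_pw.aemeasurable

instance [IsProbabilityMeasure F] : IsProbabilityMeasure (annealedLaw α β γ F n) :=
  isProbabilityMeasure_bind measurable_bipLaw_pw.aemeasurable (.of_forall fun _ => inferInstance)

lemma degPMF_eq_annealedLaw [NeZero n] [IsProbabilityMeasure F] (k : ℕ) :
    degPMF α β γ F n k = (annealedLaw α β γ F n {B | deg B 0 = k}).toReal := by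
  have hS : MeasurableSet {B : Fin n → Fin (numGroups β α n) → Bool | deg B 0 = k} :=
    (Set.to_countable _).measurableSet
  rw [degPMF, dif_pos (NeZero.ne n), annealedLaw_apply hS]
  exact integral_toReal ((Measure.measurable_coe hS).comp measurable_bipLaw_pw).aemeasurable
    (.of_forall fun _ => measure_lt_top _ _)

lemma annealedLaw_deg_ne_zero_le [NeZero n] [IsProbabilityMeasure F] (hγ : 0 ≤ γ) :
    annealedLaw α β γ F n {B | deg B 0 ≠ 0} ≤
      ENNReal.ofReal (numGroups β α n * (γ * n ^ (-(1 + α) / 2))) * ∫⁻ x, ENNReal.ofReal x ∂F := by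
  set c : ℝ := γ * n ^ (-(1 + α) / 2)
  have hc : 0 ≤ c := by positivity
  calc annealedLaw α β γ F n {B | deg B 0 ≠ 0}
      ≤ annealedLaw α β γ F n {B | ∃ a, B 0 a = true} :=
        measure_mono fun _ => exists_of_deg_ne_zero
    _ = ∫⁻ v, bipLaw n (numGroups β α n) (fun i => pw γ α n (v i)) {B | ∃ a, B 0 a = true}
          ∂Measure.pi fun _ : Fin n => F :=
        annealedLaw_apply (Set.to_countable _).measurableSet
    _ ≤ ∫⁻ v, numGroups β α n * ENNReal.ofReal (c * v 0) ∂Measure.pi fun _ : Fin n => F := by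
        refine lintegral_mono fun v => (bipLaw_exists_le _ _ _ 0).trans ?_
        gcongr
        exact (min_le_left _ _).trans_eq (by ring)
    _ = ENNReal.ofReal (numGroups β α n * c) * ∫⁻ v, ENNReal.ofReal (v 0)
          ∂Measure.pi fun _ : Fin n => F := by
        rw [← lintegral_const_mul _ (by fun_prop)]
        congr with v
        rw [ENNReal.ofReal_mul (Nat.cast_nonneg _), ENNReal.ofReal_natCast,
          ENNReal.ofReal_mul hc, mul_assoc]
    _ = _ := by
        rw [(measurePreserving_eval (fun _ : Fin n => F) 0).lintegral_comp
          ENNReal.measurable_ofReal]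

end annealedLaw

lemma tendsto_numGroups_mul_rpow {α β : ℝ} (hα1 : α < 1) (hβ : 0 ≤ β) :
    Tendsto (fun n : ℕ => (numGroups β α n : ℝ) * n ^ (-(1 + α) / 2)) atTop (nhds 0) := by
  have hlim : Tendsto (fun n : ℕ => β * (n : ℝ) ^ (-((1 - α) / 2))) atTop (nhds 0) := by
    simpa using ((tendsto_rpow_neg_atTop (by linarith)).comp
      tendsto_natCast_atTop_atTop).const_mul β
  refine squeeze_zero' (.of_forall fun n => by positivity) ?_ hlim
  filter_upwards [eventually_ne_atTop 0] with n hn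
  have hn : (0 : ℝ) < n := by positivity
  calc (numGroups β α n : ℝ) * n ^ (-(1 + α) / 2)
      ≤ β * n ^ α * n ^ (-(1 + α) / 2) := by
        gcongr; exact Nat.floor_le (by positivity)
    _ = β * (n : ℝ) ^ (-((1 - α) / 2)) := by
        rw [mul_assoc, ← Real.rpow_add hn]; ring_nf

-- Shifted to `n + 1` so that vertex `0 : Fin n` exists.
lemma tendsto_annealedLaw_deg_ne_zero {α β γ : ℝ} (hα1 : α < 1) (hβ : 0 ≤ β) (hγ : 0 ≤ γ)
    {F : Measure ℝ} [IsProbabilityMeasure F] (hF : Integrable (fun x => x) F) :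
    Tendsto (fun n => annealedLaw α β γ F (n + 1) {B | deg B 0 ≠ 0}) atTop (nhds 0) := by
  have hF' : ∫⁻ x, ENNReal.ofReal x ∂F ≠ ⊤ :=
    ((lintegral_ofReal_le_lintegral_enorm _).trans_lt hF.2).ne
  have hlim := ENNReal.Tendsto.mul_const (ENNReal.tendsto_ofReal
    ((tendsto_numGroups_mul_rpow hα1 hβ).comp (tendsto_add_atTop_nat 1) |>.const_mul γ))
    (Or.inr hF')
  simp only [mul_zero, ENNReal.ofReal_zero, zero_mul] at hlim
  refine tendsto_of_tendsto_of_tendsto_of_le_of_le tendsto_const_nhds hlim (fun _ => zero_le)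
    fun n => (annealedLaw_deg_ne_zero_le hγ).trans_eq ?_
  simp only [Function.comp_apply]
  ring_nf

theorem degree_point_mass_general (α β γ : ℝ) (hα1 : α < 1) (hβ : 0 < β) (hγ : 0 < γ)
    (F : Measure ℝ) [IsProbabilityMeasure F]
    (hFint : Integrable (fun x => x) F) :
    ∀ k : ℕ,
      Tendsto (fun n => degPMF α β γ F n k) atTop
        (nhds (if k = 0 then (1 : ℝ) else 0)) := by
  intro k
  have hne := tendsto_annealedLaw_deg_ne_zero hα1 hβ.le hγ.le hFint
  have hlaw : Tendsto (fun n => annealedLaw α β γ F (n + 1) {B | deg B 0 = k}) atTop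
      (nhds (if k = 0 then 1 else 0)) := by
    rcases eq_or_ne k 0 with rfl | hk
    · rw [if_pos rfl]
      have hcompl := ENNReal.Tendsto.sub tendsto_const_nhds hne (Or.inl ENNReal.one_ne_top)
      simpa [← prob_compl_eq_one_sub (Set.to_countable _).measurableSet, Set.compl_ofPred]
        using hcompl
    · rw [if_neg hk]
      exact tendsto_of_tendsto_of_tendsto_of_le_of_le tendsto_const_nhds hne
        (fun _ => zero_le) fun n => measure_mono fun B (hB : deg B 0 = k) => hB.trans_ne hk
  have hreal := (ENNReal.tendsto_toReal (by split_ifs <;> simp)).comp hlaw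
  rw [← tendsto_add_atTop_iff_nat 1]
  simp_rw [degPMF_eq_annealedLaw]
  split_ifs at hreal ⊢ <;> exact hreal

/-- Theorem 1(a): in the random intersection graph `G(n,m,F)` with `m = ⌊β n^α⌋` and
`p_i = min(γ W_i n^{-(1+α)/2}, 1)`, if `F` has finite mean and `α < 1`, then the degree
of a given vertex converges in distribution to a point mass at `0` as `n → ∞`. -/
theorem degree_point_mass (α β γ : ℝ) (hα : 0 < α) (hα1 : α < 1) (hβ : 0 < β) (hγ : 0 < γ)
    (F : Measure ℝ) [IsProbabilityMeasure F]
    (hFpos : F (Set.Iic 0) = 0)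
    (hFint : Integrable (fun x => x) F) (hFmean : ∫ x, x ∂F = 1) :
    ∀ k : ℕ,
      Tendsto (fun n => degPMF α β γ F n k) atTop
        (nhds (if k = 0 then (1 : ℝ) else 0)) :=
  degree_point_mass_general α β γ hα1 hβ hγ F hFint
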